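/- arXiv:1111.4576 — 2 statements merged into one kernel-verified Lean document; each statement's English description precedes it below -/
import Mathlib

section
/- For a quadratic function Q(x) = c + gᵀx + (1/2)xᵀGx with symmetric G, and any ball B of radius r centered at x₀, the quantity (1/(Vₙrⁿ)) ∫_B ‖∇Q(x)‖₂² dx (the mean of ‖∇Q‖₂² over B) equals ‖∇Q(x₀)‖₂² + (r²/(n+2))‖G‖_F². In particular, the average of ‖∇Q‖₂² over B is at least ‖∇Q(x₀)‖₂², the squared gradient norm at the center. -/
open MeasureTheory Metric Real
open scoped RealInnerProductSpace

noncomputable def Vball (n : ℕ) : ℝ :=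
  (volume (closedBall (0 : EuclideanSpace ℝ (Fin n)) 1)).toReal

noncomputable def mApp {n : ℕ} (G : Matrix (Fin n) (Fin n) ℝ)
    (x : EuclideanSpace ℝ (Fin n)) : EuclideanSpace ℝ (Fin n) :=
  Matrix.toEuclideanLin G x

noncomputable def frobSq {n : ℕ} (G : Matrix (Fin n) (Fin n) ℝ) : ℝ :=
  ∑ i, ∑ j, (G i j) ^ 2

noncomputable def quadF {n : ℕ} (p : ℝ × EuclideanSpace ℝ (Fin n) × Matrix (Fin n) (Fin n) ℝ)
    (x : EuclideanSpace ℝ (Fin n)) : ℝ :=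
  p.1 + ⟪p.2.1, x⟫ + ⟪x, mApp p.2.2 x⟫ / 2

noncomputable def gradF {n : ℕ} (p : ℝ × EuclideanSpace ℝ (Fin n) × Matrix (Fin n) (Fin n) ℝ)
    (x : EuclideanSpace ℝ (Fin n)) : EuclideanSpace ℝ (Fin n) :=
  mApp p.2.2 x + p.2.1

section Aux

variable {n : ℕ}

lemma isom_setIntegral (e : EuclideanSpace ℝ (Fin n) ≃ₗᵢ[ℝ] EuclideanSpace ℝ (Fin n))
    (f : EuclideanSpace ℝ (Fin n) → ℝ) (r : ℝ) :
    ∫ y in closedBall (0 : EuclideanSpace ℝ (Fin n)) r, f (e y) =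
    ∫ y in closedBall (0 : EuclideanSpace ℝ (Fin n)) r, f y := by
  have h := e.measurePreserving.setIntegral_preimage_emb
    e.toHomeomorph.measurableEmbedding f (closedBall 0 r)
  rw [← h]
  congr 1
  ext y
  simp [mem_closedBall, dist_zero_right, e.norm_map]

lemma odd_integral_zero (e : EuclideanSpace ℝ (Fin n) ≃ₗᵢ[ℝ] EuclideanSpace ℝ (Fin n))
    (f : EuclideanSpace ℝ (Fin n) → ℝ) (hf : ∀ y, f (e y) = -f y) (r : ℝ) :
    ∫ y in closedBall (0 : EuclideanSpace ℝ (Fin n)) r, f y = 0 := by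
  have h := isom_setIntegral e f r
  simp only [hf] at h
  rw [integral_neg] at h
  linarith

noncomputable def refl_j (j : Fin n) :
    EuclideanSpace ℝ (Fin n) ≃ₗᵢ[ℝ] EuclideanSpace ℝ (Fin n) :=
  LinearIsometryEquiv.piLpCongrRight 2
    (fun i => if i = j then LinearIsometryEquiv.neg ℝ else LinearIsometryEquiv.refl ℝ ℝ)

lemma refl_j_apply (j i : Fin n) (y : EuclideanSpace ℝ (Fin n)) :
    refl_j j y i = if i = j then -(y i) else y i := by
  simp [refl_j]
  split <;> simp

noncomputable def swap_jk (j k : Fin n) :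
    EuclideanSpace ℝ (Fin n) ≃ₗᵢ[ℝ] EuclideanSpace ℝ (Fin n) :=
  LinearIsometryEquiv.piLpCongrLeft 2 ℝ ℝ (Equiv.swap j k)

lemma swap_jk_apply (j k i : Fin n) (y : EuclideanSpace ℝ (Fin n)) :
    swap_jk j k y i = y (Equiv.swap j k i) := by
  simp [swap_jk, LinearIsometryEquiv.piLpCongrLeft_apply, Equiv.piCongrLeft'_apply,
    Equiv.symm_symm]

lemma contCoord (j : Fin n) : Continuous fun y : EuclideanSpace ℝ (Fin n) => y j :=
  (EuclideanSpace.proj (𝕜 := ℝ) j).continuous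

lemma contInt {f : EuclideanSpace ℝ (Fin n) → ℝ} (hf : Continuous f)
    (x₀ : EuclideanSpace ℝ (Fin n)) (r : ℝ) :
    IntegrableOn f (closedBall x₀ r) volume :=
  hf.continuousOn.integrableOn_compact (isCompact_closedBall _ _)

lemma norm_sq_sum (y : EuclideanSpace ℝ (Fin n)) : ‖y‖ ^ 2 = ∑ i, (y i) ^ 2 := by
  rw [EuclideanSpace.norm_eq, Real.sq_sqrt (by positivity)]
  simp [sq_abs]

lemma normsq_integral (hn : 1 ≤ n) (r : ℝ) (hr : 0 < r) :
    ∫ y in closedBall (0 : EuclideanSpace ℝ (Fin n)) r, ‖y‖ ^ 2 =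
      n * (volume (ball (0 : EuclideanSpace ℝ (Fin n)) 1)).toReal * (r ^ (n + 2) / (n + 2)) := by
  haveI : Nonempty (Fin n) := Fin.pos_iff_nonempty.mp hn
  haveI : Nontrivial (EuclideanSpace ℝ (Fin n)) :=
    Module.nontrivial_of_finrank_pos (R := ℝ)
      (by rw [finrank_euclideanSpace_fin]; omega)
  have h1 : ∫ y in closedBall (0 : EuclideanSpace ℝ (Fin n)) r, ‖y‖ ^ 2 =
      ∫ y : EuclideanSpace ℝ (Fin n), Set.indicator (Set.Iic r) (fun t => t ^ 2) ‖y‖ := by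
    rw [← integral_indicator (measurableSet_closedBall)]
    congr 1
    ext y
    by_cases h : y ∈ closedBall (0 : EuclideanSpace ℝ (Fin n)) r
    · rw [Set.indicator_of_mem h, Set.indicator_of_mem]
      simpa [mem_closedBall, dist_zero_right] using h
    · rw [Set.indicator_of_notMem h, Set.indicator_of_notMem]
      simpa [mem_closedBall, dist_zero_right] using h
  rw [h1, integral_fun_norm_addHaar volume (Set.indicator (Set.Iic r) (fun t => t ^ 2))]
  rw [finrank_euclideanSpace_fin]
  have h2 : ∀ y : ℝ, y ^ (n - 1) • Set.indicator (Set.Iic r) (fun t => t ^ 2) y =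
      Set.indicator (Set.Iic r) (fun t => t ^ (n + 1)) y := by
    intro y
    by_cases h : y ∈ Set.Iic r
    · rw [Set.indicator_of_mem h, Set.indicator_of_mem h, smul_eq_mul, ← pow_add]
      congr 1
      omega
    · rw [Set.indicator_of_notMem h, Set.indicator_of_notMem h, smul_zero]
  simp only [h2]
  rw [setIntegral_indicator measurableSet_Iic, Set.Ioi_inter_Iic,
    ← intervalIntegral.integral_of_le hr.le, integral_pow]
  rw [nsmul_eq_mul, smul_eq_mul]
  push_cast
  simp only [measureReal_def]
  ring

lemma coord_mul_integral {j k : Fin n} (hjk : j ≠ k) (r : ℝ) :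
    ∫ y in closedBall (0 : EuclideanSpace ℝ (Fin n)) r, (y j) * (y k) = 0 := by
  refine odd_integral_zero (refl_j j) (fun y => y j * y k) (fun y => ?_) r
  have h1 : refl_j j y j = -(y j) := by rw [refl_j_apply, if_pos rfl]
  have h2 : refl_j j y k = y k := by rw [refl_j_apply, if_neg (Ne.symm hjk)]
  show refl_j j y j * refl_j j y k = -(y j * y k)
  rw [h1, h2]; ring

lemma coord_sq_integral (hn : 1 ≤ n) (r : ℝ) (hr : 0 < r) (j : Fin n) :
    ∫ y in closedBall (0 : EuclideanSpace ℝ (Fin n)) r, (y j) ^ 2 =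
      (volume (ball (0 : EuclideanSpace ℝ (Fin n)) 1)).toReal * (r ^ (n + 2) / (n + 2)) := by
  have hall : ∀ k : Fin n, (∫ y in closedBall (0 : EuclideanSpace ℝ (Fin n)) r, (y k) ^ 2) =
      ∫ y in closedBall (0 : EuclideanSpace ℝ (Fin n)) r, (y j) ^ 2 := by
    intro k
    have h := isom_setIntegral (swap_jk j k) (fun y => (y j) ^ 2) r
    have hcong : ∀ y : EuclideanSpace ℝ (Fin n), (swap_jk j k y) j ^ 2 = (y k) ^ 2 := by
      intro y
      rw [swap_jk_apply, Equiv.swap_apply_left]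
    simp only [hcong] at h
    exact h
  have hsum : ∑ k : Fin n, (∫ y in closedBall (0 : EuclideanSpace ℝ (Fin n)) r, (y k) ^ 2) =
      ∫ y in closedBall (0 : EuclideanSpace ℝ (Fin n)) r, ‖y‖ ^ 2 := by
    rw [← integral_finset_sum]
    · apply setIntegral_congr_fun measurableSet_closedBall
      intro y _
      exact (norm_sq_sum y).symm
    · exact fun k _ => contInt ((contCoord k).pow 2) _ _
  have hsum' : (n : ℝ) * (∫ y in closedBall (0 : EuclideanSpace ℝ (Fin n)) r, (y j) ^ 2) =
      (n : ℝ) * ((volume (ball (0 : EuclideanSpace ℝ (Fin n)) 1)).toReal *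
        (r ^ (n + 2) / (n + 2))) := by
    rw [← mul_assoc, ← normsq_integral hn r hr, ← hsum]
    rw [Finset.sum_congr rfl (fun k _ => hall k), Finset.sum_const, Finset.card_univ,
      Fintype.card_fin, nsmul_eq_mul]
  have hn' : (n : ℝ) ≠ 0 := by positivity
  exact mul_left_cancel₀ hn' hsum'

lemma frobSq_nonneg (G : Matrix (Fin n) (Fin n) ℝ) : 0 ≤ frobSq G :=
  Finset.sum_nonneg fun i _ => Finset.sum_nonneg fun j _ => sq_nonneg _

end Aux

theorem stmt_16 (n : ℕ) (c : ℝ) (g x₀ : EuclideanSpace ℝ (Fin n))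
    (G : Matrix (Fin n) (Fin n) ℝ) (hG : G.IsSymm) (r : ℝ) (hr : 0 < r) :
    (1 / (Vball n * r ^ n)) * ∫ x in closedBall x₀ r, ‖mApp G x + g‖ ^ 2 =
      ‖mApp G x₀ + g‖ ^ 2 + r ^ 2 / (n + 2) * frobSq G ∧
    ‖mApp G x₀ + g‖ ^ 2 ≤
      (1 / (Vball n * r ^ n)) * ∫ x in closedBall x₀ r, ‖mApp G x + g‖ ^ 2 := by
  rcases Nat.eq_zero_or_pos n with hn0 | hn
  · subst hn0
    have hzero : ∀ w : EuclideanSpace ℝ (Fin 0), ‖w‖ = 0 := fun w => by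
      simp [EuclideanSpace.norm_eq]
    have hfz : frobSq G = 0 := by simp [frobSq]
    constructor <;> simp [hzero, hfz]
  · -- main case
    set v : EuclideanSpace ℝ (Fin n) := mApp G x₀ + g with hv
    haveI : Nonempty (Fin n) := Fin.pos_iff_nonempty.mp hn
    haveI : Nontrivial (EuclideanSpace ℝ (Fin n)) :=
      Module.nontrivial_of_finrank_pos (R := ℝ) (by rw [finrank_euclideanSpace_fin]; omega)
    have hGc : Continuous (fun y : EuclideanSpace ℝ (Fin n) => mApp G y) :=
      (Matrix.toEuclideanLin G).continuous_of_finiteDimensional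
    -- translation
    have htrans : (∫ x in closedBall x₀ r, ‖mApp G x + g‖ ^ 2) =
        ∫ y in closedBall (0 : EuclideanSpace ℝ (Fin n)) r, ‖mApp G y + v‖ ^ 2 := by
      have hmp : MeasurePreserving (fun y : EuclideanSpace ℝ (Fin n) => y + x₀) volume volume :=
        measurePreserving_add_right volume x₀
      have hemb := (Homeomorph.addRight x₀).measurableEmbedding
      have h := hmp.setIntegral_preimage_emb hemb
        (fun x => ‖mApp G x + g‖ ^ 2) (closedBall x₀ r)
      rw [← h]
      have hpre : (fun y : EuclideanSpace ℝ (Fin n) => y + x₀) ⁻¹' (closedBall x₀ r) =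
          closedBall 0 r := by
        ext y
        simp [mem_closedBall, dist_eq_norm]
      rw [hpre]
      congr 1
      ext y
      have hadd : mApp G (y + x₀) = mApp G y + mApp G x₀ :=
        map_add (Matrix.toEuclideanLin G) y x₀
      rw [hadd, hv, add_assoc]
    -- expand the square
    have hexp : ∀ y : EuclideanSpace ℝ (Fin n),
        ‖mApp G y + v‖ ^ 2 = ‖mApp G y‖ ^ 2 + 2 * ⟪mApp G y, v⟫ + ‖v‖ ^ 2 :=
      fun y => norm_add_sq_real _ _
    have hInt1 : IntegrableOn (fun y : EuclideanSpace ℝ (Fin n) => ‖mApp G y‖ ^ 2)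
        (closedBall 0 r) volume := contInt (hGc.norm.pow 2) _ _
    have hIntInner : IntegrableOn (fun y : EuclideanSpace ℝ (Fin n) => 2 * ⟪mApp G y, v⟫)
        (closedBall 0 r) volume :=
      contInt (continuous_const.mul (hGc.inner continuous_const)) _ _
    have hIntC : IntegrableOn (fun _ : EuclideanSpace ℝ (Fin n) => ‖v‖ ^ 2)
        (closedBall 0 r) volume := contInt continuous_const _ _
    have hsplit : (∫ y in closedBall (0 : EuclideanSpace ℝ (Fin n)) r, ‖mApp G y + v‖ ^ 2) =
        (∫ y in closedBall (0 : EuclideanSpace ℝ (Fin n)) r, ‖mApp G y‖ ^ 2) +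
        (∫ y in closedBall (0 : EuclideanSpace ℝ (Fin n)) r, 2 * ⟪mApp G y, v⟫) +
        (∫ y in closedBall (0 : EuclideanSpace ℝ (Fin n)) r, ‖v‖ ^ 2) := by
      have hIntAdd : IntegrableOn
          (fun y : EuclideanSpace ℝ (Fin n) => ‖mApp G y‖ ^ 2 + 2 * ⟪mApp G y, v⟫)
          (closedBall 0 r) volume := hInt1.add hIntInner
      simp only [hexp]
      rw [integral_add hIntAdd hIntC, integral_add hInt1 hIntInner]
    -- inner term is zero
    have hodd : (∫ y in closedBall (0 : EuclideanSpace ℝ (Fin n)) r, ⟪mApp G y, v⟫) = 0 := by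
      refine odd_integral_zero (LinearIsometryEquiv.neg ℝ) _ (fun y => ?_) r
      have hneg : mApp G (-y) = -(mApp G y) := map_neg (Matrix.toEuclideanLin G) y
      show ⟪mApp G (-y), v⟫ = -⟪mApp G y, v⟫
      rw [hneg, inner_neg_left]
    -- quadratic term
    set Vb : ℝ := (volume (ball (0 : EuclideanSpace ℝ (Fin n)) 1)).toReal with hVbdef
    have hquad : (∫ y in closedBall (0 : EuclideanSpace ℝ (Fin n)) r, ‖mApp G y‖ ^ 2) =
        frobSq G * (Vb * (r ^ (n + 2) / (n + 2))) := by
      have happ : ∀ (y : EuclideanSpace ℝ (Fin n)) (i : Fin n),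
          mApp G y i = ∑ j, G i j * y j := fun _ _ => rfl
      have hsq : ∀ y : EuclideanSpace ℝ (Fin n),
          ‖mApp G y‖ ^ 2 = ∑ i, ∑ j, ∑ k, (G i j * G i k) * (y j * y k) := by
        intro y
        rw [norm_sq_sum]
        refine Finset.sum_congr rfl fun i _ => ?_
        rw [happ, sq, Finset.sum_mul_sum]
        exact Finset.sum_congr rfl fun j _ => Finset.sum_congr rfl fun k _ => by ring
      simp only [hsq]
      rw [integral_finset_sum (f := fun i (y : EuclideanSpace ℝ (Fin n)) => ∑ j, ∑ k, G i j * G i k * (y j * y k)) _ (fun i _ => integrable_finset_sum _ (fun j _ =>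
        integrable_finset_sum _ (fun k _ =>
          contInt (continuous_const.mul ((contCoord j).mul (contCoord k))) _ _)))]
      have : ∀ i : Fin n,
          (∫ y in closedBall (0 : EuclideanSpace ℝ (Fin n)) r,
            ∑ j, ∑ k, (G i j * G i k) * (y j * y k)) =
          ∑ j, G i j ^ 2 * (Vb * (r ^ (n + 2) / (n + 2))) := by
        intro i
        rw [integral_finset_sum (f := fun j (y : EuclideanSpace ℝ (Fin n)) => ∑ k, G i j * G i k * (y j * y k)) _ (fun j _ => integrable_finset_sum _ (fun k _ =>
          contInt (continuous_const.mul ((contCoord j).mul (contCoord k))) _ _))]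
        refine Finset.sum_congr rfl fun j _ => ?_
        rw [integral_finset_sum (f := fun k (y : EuclideanSpace ℝ (Fin n)) => G i j * G i k * (y j * y k)) _ (fun k _ =>
          contInt (continuous_const.mul ((contCoord j).mul (contCoord k))) _ _)]
        rw [Finset.sum_eq_single j]
        · rw [integral_const_mul]
          have : (∫ y in closedBall (0 : EuclideanSpace ℝ (Fin n)) r, y j * y j) =
              Vb * (r ^ (n + 2) / (n + 2)) := by
            rw [← coord_sq_integral hn r hr j]
            exact setIntegral_congr_fun measurableSet_closedBall fun y _ => (sq (y j)).symm ▸ by ring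
          rw [this, sq]
        · intro k _ hkj
          rw [integral_const_mul, coord_mul_integral (Ne.symm hkj), mul_zero]
        · intro h
          exact absurd (Finset.mem_univ j) h
      rw [Finset.sum_congr rfl (fun i _ => this i), frobSq, Finset.sum_mul]
      exact Finset.sum_congr rfl fun i _ => by rw [Finset.sum_mul]
    -- constant term
    have hvol : (volume (closedBall x₀ r)).toReal = Vball n * r ^ n := by
      rw [Measure.addHaar_closedBall' volume x₀ hr.le, finrank_euclideanSpace_fin,
        ENNReal.toReal_mul, ENNReal.toReal_ofReal (by positivity)]
      rw [Vball, mul_comm]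
    have hconst : (∫ _ in closedBall (0 : EuclideanSpace ℝ (Fin n)) r, ‖v‖ ^ 2) =
        (Vball n * r ^ n) * ‖v‖ ^ 2 := by
      rw [setIntegral_const, smul_eq_mul]
      congr 1
      rw [measureReal_def, ← hvol, Measure.addHaar_closedBall' volume x₀ hr.le,
        Measure.addHaar_closedBall' volume (0 : EuclideanSpace ℝ (Fin n)) hr.le]
    have hVb : Vb = Vball n := by
      rw [hVbdef, Vball, Measure.addHaar_closedBall_eq_addHaar_ball]
    have hV0 : 0 < Vball n :=
      ENNReal.toReal_pos (measure_closedBall_pos volume 0 one_pos).ne'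
        measure_closedBall_lt_top.ne
    have hkey : (∫ x in closedBall x₀ r, ‖mApp G x + g‖ ^ 2) =
        frobSq G * (Vball n * (r ^ (n + 2) / (n + 2))) + (Vball n * r ^ n) * ‖v‖ ^ 2 := by
      rw [htrans, hsplit, hquad, hconst, hVb]
      have h2 : (∫ y in closedBall (0 : EuclideanSpace ℝ (Fin n)) r, 2 * ⟪mApp G y, v⟫) = 0 := by
        rw [integral_const_mul, hodd, mul_zero]
      rw [h2, add_zero]
    have hrn : (0 : ℝ) < r ^ n := by positivity
    have hn2 : ((n : ℝ) + 2) ≠ 0 := by positivity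
    have hmain : (1 / (Vball n * r ^ n)) * ∫ x in closedBall x₀ r, ‖mApp G x + g‖ ^ 2 =
        ‖mApp G x₀ + g‖ ^ 2 + r ^ 2 / (n + 2) * frobSq G := by
      rw [hkey, ← hv]
      have hpow : r ^ (n + 2) = r ^ n * r ^ 2 := pow_add r n 2
      rw [hpow]
      field_simp
      ring
    refine ⟨hmain, ?_⟩
    rw [hmain]
    have : 0 ≤ r ^ 2 / (n + 2) * frobSq G :=
      mul_nonneg (div_nonneg (sq_nonneg r) (by positivity)) (frobSq_nonneg G)
    linarith
end

section
/- Under the hypotheses of the preceding statement (S ⊂ B(y₀,r) with L of rank n, ∇F Lipschitz with constant ν on B(y₀,r), Q a quadratic interpolant of F on S), it also holds that |Q(x) − F(x)| ≤ ((5√m/2)‖L⁺‖₂ + 1/2)(ν + ‖∇²Q‖₂) r² for every x ∈ B(y₀, r). -/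
open MeasureTheory Metric Real
open scoped Matrix
open scoped RealInnerProductSpace

noncomputable def l2op {k l : ℕ} (A : Matrix (Fin k) (Fin l) ℝ) : ℝ :=
  ‖LinearMap.toContinuousLinearMap (Matrix.toEuclideanLin A)‖

/-! ### Auxiliary lemmas -/

lemma taylor_bound {n : ℕ} {s : Set (EuclideanSpace ℝ (Fin n))} (hs : Convex ℝ s)
    {F : EuclideanSpace ℝ (Fin n) → ℝ} {F' : EuclideanSpace ℝ (Fin n) → EuclideanSpace ℝ (Fin n)}
    {ν : ℝ}
    (hF : ∀ x ∈ s, HasGradientAt F (F' x) x)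
    (hlip : ∀ u ∈ s, ∀ v ∈ s, ‖F' u - F' v‖ ≤ ν * ‖u - v‖)
    {u v : EuclideanSpace ℝ (Fin n)} (hu : u ∈ s) (hv : v ∈ s) :
    |F v - F u - ⟪F' u, v - u⟫| ≤ ν / 2 * ‖v - u‖ ^ 2 := by
  set d := v - u with hd
  have hmem : ∀ t ∈ Set.Icc (0:ℝ) 1, u + t • d ∈ s := fun t ht => hs.add_smul_sub_mem hu hv ht
  set f : ℝ → ℝ := fun t => F (u + t • d) - t * ⟪F' u, d⟫ - F u with hfdef
  set f' : ℝ → ℝ := fun t => ⟪F' (u + t • d) - F' u, d⟫ with hf'def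
  have hderiv : ∀ t ∈ Set.Icc (0:ℝ) 1, HasDerivAt f (f' t) t := by
    intro t ht
    have hline : HasDerivAt (fun t : ℝ => u + t • d) d t := by
      simpa using ((hasDerivAt_id t).smul_const d).const_add u
    have hgrad := (hF _ (hmem t ht)).hasFDerivAt
    have hcomp : HasDerivAt (fun t : ℝ => F (u + t • d))
        ((InnerProductSpace.toDual ℝ _ (F' (u + t • d))) d) t :=
      hgrad.comp_hasDerivAt t hline
    have h2 : HasDerivAt (fun t : ℝ => t * ⟪F' u, d⟫) ⟪F' u, d⟫ t := by
      simpa using (hasDerivAt_id t).mul_const (⟪F' u, d⟫)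
    have := (hcomp.sub h2).sub_const (F u)
    simpa [hfdef, hf'def, InnerProductSpace.toDual_apply_apply, inner_sub_left] using this
  have hB : ∀ t : ℝ, HasDerivAt (fun t => ν * ‖d‖ ^ 2 / 2 * t ^ 2) (ν * ‖d‖ ^ 2 * t) t := by
    intro t
    have := (hasDerivAt_pow 2 t).const_mul (ν * ‖d‖ ^ 2 / 2)
    refine this.congr_deriv ?_
    ring
  have hcont : ContinuousOn f (Set.Icc (0:ℝ) 1) :=
    fun t ht => (hderiv t ht).continuousAt.continuousWithinAt
  have hfd : ∀ t ∈ Set.Ico (0:ℝ) 1, HasDerivWithinAt f (f' t) (Set.Ici t) t :=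
    fun t ht => ((hderiv t (Set.mem_Icc_of_Ico ht)).hasDerivWithinAt)
  have ha : ‖f 0‖ ≤ ν * ‖d‖ ^ 2 / 2 * (0:ℝ) ^ 2 := by simp [hfdef]
  have hbound : ∀ t ∈ Set.Ico (0:ℝ) 1, ‖f' t‖ ≤ ν * ‖d‖ ^ 2 * t := by
    intro t ht
    have h1 : ‖F' (u + t • d) - F' u‖ ≤ ν * (t * ‖d‖) := by
      have := hlip _ (hmem t (Set.mem_Icc_of_Ico ht)) u hu
      simpa [norm_smul, abs_of_nonneg ht.1] using this
    have h2 : |f' t| ≤ ‖F' (u + t • d) - F' u‖ * ‖d‖ := abs_real_inner_le_norm _ _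
    have h3 : |f' t| ≤ ν * (t * ‖d‖) * ‖d‖ :=
      h2.trans (by exact mul_le_mul_of_nonneg_right h1 (norm_nonneg _))
    calc ‖f' t‖ = |f' t| := rfl
      _ ≤ ν * (t * ‖d‖) * ‖d‖ := h3
      _ = ν * ‖d‖ ^ 2 * t := by ring
  have key : ∀ ⦃t⦄, t ∈ Set.Icc (0:ℝ) 1 → ‖f t‖ ≤ ν * ‖d‖ ^ 2 / 2 * t ^ 2 :=
    image_norm_le_of_norm_deriv_right_le_deriv_boundary hcont hfd ha hB hbound
  have h1 := key (Set.right_mem_Icc.2 zero_le_one)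
  have hv' : u + (1:ℝ) • d = v := by simp [hd]
  rw [hfdef] at h1
  simp only [hv', one_mul, one_pow, mul_one] at h1
  calc |F v - F u - ⟪F' u, d⟫| = ‖F v - (1:ℝ) * ⟪F' u, d⟫ - F u‖ := by
        rw [Real.norm_eq_abs]; ring_nf
    _ ≤ ν * ‖d‖ ^ 2 / 2 * 1 ^ 2 := by simpa [hv'] using h1
    _ = ν / 2 * ‖d‖ ^ 2 := by ring

lemma toEuclideanLin_apply' {k l : ℕ} (A : Matrix (Fin k) (Fin l) ℝ)
    (x : EuclideanSpace ℝ (Fin l)) (i : Fin k) :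
    Matrix.toEuclideanLin A x i = ∑ j, A i j * x j := rfl

lemma l2op_nonneg {k l : ℕ} (A : Matrix (Fin k) (Fin l) ℝ) : 0 ≤ l2op A := norm_nonneg _

lemma l2op_bound {k l : ℕ} (A : Matrix (Fin k) (Fin l) ℝ) (x : EuclideanSpace ℝ (Fin l)) :
    ‖Matrix.toEuclideanLin A x‖ ≤ l2op A * ‖x‖ :=
  (LinearMap.toContinuousLinearMap (Matrix.toEuclideanLin A)).le_opNorm x

open scoped Matrix.Norms.L2Operator in
lemma l2op_transpose {k l : ℕ} (A : Matrix (Fin k) (Fin l) ℝ) : l2op Aᵀ = l2op A := by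
  have h1 : l2op A = ‖A‖ := rfl
  have h2 : l2op Aᵀ = ‖Aᵀ‖ := rfl
  have h3 : Aᵀ = Aᴴ := by ext i j; simp [Matrix.conjTranspose]
  rw [h1, h2, h3, Matrix.l2_opNorm_conjTranspose]

lemma inner_mApp_symm {n : ℕ} {G : Matrix (Fin n) (Fin n) ℝ} (hG : G.IsSymm)
    (u v : EuclideanSpace ℝ (Fin n)) : ⟪u, mApp G v⟫ = ⟪mApp G u, v⟫ := by
  calc ⟪u, mApp G v⟫ = ∑ i, ∑ j, u i * (G i j * v j) := by
        simp [mApp, PiLp.inner_apply, toEuclideanLin_apply', Finset.mul_sum]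
        refine Finset.sum_congr rfl fun i _ => ?_
        rw [Finset.sum_mul]
        exact Finset.sum_congr rfl fun j _ => by ring
    _ = ∑ j, ∑ i, u i * (G i j * v j) := Finset.sum_comm
    _ = ∑ j, (∑ i, G j i * u i) * v j := by
        apply Finset.sum_congr rfl; intro j _
        rw [Finset.sum_mul]
        apply Finset.sum_congr rfl; intro i _
        rw [← hG.apply j i]
        ring
    _ = ⟪mApp G u, v⟫ := by
        simp [mApp, PiLp.inner_apply, toEuclideanLin_apply']
        exact Finset.sum_congr rfl fun i _ => mul_comm _ _

lemma isUnit_LLT {n m : ℕ} (L : Matrix (Fin n) (Fin m) ℝ) (hrank : L.rank = n) :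
    IsUnit (L * Lᵀ) := by
  have hr : (L * Lᵀ).rank = n := by rw [Matrix.rank_self_mul_transpose]; exact hrank
  rw [← Matrix.mulVec_surjective_iff_isUnit]
  have htop : LinearMap.range (L * Lᵀ).mulVecLin = ⊤ := by
    apply Submodule.eq_top_of_finrank_eq
    rw [← Matrix.rank, hr]
    simp
  exact LinearMap.range_eq_top.mp htop

lemma toEuc_mul {a b c : ℕ} (A : Matrix (Fin a) (Fin b) ℝ) (B : Matrix (Fin b) (Fin c) ℝ)
    (x : EuclideanSpace ℝ (Fin c)) :
    Matrix.toEuclideanLin (A * B) x = Matrix.toEuclideanLin A (Matrix.toEuclideanLin B x) := by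
  simp only [Matrix.toEuclideanLin_eq_toLin]
  rw [Matrix.toLin_mul (v₂ := PiLp.basisFun 2 ℝ (Fin b))]
  rfl

lemma recover {n m : ℕ} (L : Matrix (Fin n) (Fin m) ℝ) (hrank : L.rank = n)
    (h : EuclideanSpace ℝ (Fin n)) :
    Matrix.toEuclideanLin (Lᵀ * (L * Lᵀ)⁻¹)ᵀ (Matrix.toEuclideanLin Lᵀ h) = h := by
  have hu : IsUnit (L * Lᵀ) := isUnit_LLT L hrank
  have hdet : IsUnit (L * Lᵀ).det := (Matrix.isUnit_iff_isUnit_det _).mp hu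
  have h1 : (Lᵀ * (L * Lᵀ)⁻¹)ᵀ = (L * Lᵀ)⁻¹ * L := by
    rw [Matrix.transpose_mul, Matrix.transpose_nonsing_inv, Matrix.transpose_mul,
      Matrix.transpose_transpose]
  rw [h1, ← toEuc_mul, Matrix.mul_assoc, Matrix.nonsing_inv_mul _ hdet]
  simp [Matrix.toEuclideanLin_eq_toLin]

lemma norm_le_sqrt_card {m : ℕ} (w : EuclideanSpace ℝ (Fin m)) (a : ℝ) (ha : 0 ≤ a)
    (hw : ∀ j, |w j| ≤ a) : ‖w‖ ≤ Real.sqrt m * a := by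
  rw [EuclideanSpace.norm_eq]
  have hsum : ∑ j, ‖w j‖ ^ 2 ≤ (m : ℝ) * a ^ 2 := by
    calc ∑ j, ‖w j‖ ^ 2 ≤ ∑ _j : Fin m, a ^ 2 := by
          apply Finset.sum_le_sum; intro j _
          have := hw j
          rw [Real.norm_eq_abs]
          nlinarith [abs_nonneg (w j)]
      _ = (m : ℝ) * a ^ 2 := by simp [mul_comm]
  calc Real.sqrt (∑ j, ‖w j‖ ^ 2) ≤ Real.sqrt ((m : ℝ) * a ^ 2) := Real.sqrt_le_sqrt hsum
    _ = Real.sqrt m * a := by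
        rw [Real.sqrt_mul (Nat.cast_nonneg m), Real.sqrt_sq ha]

theorem stmt_19 (n m : ℕ) (hmn : n ≤ m) (r : ℝ) (hr : 0 < r) (ν : ℝ) (hν : 0 < ν)
    (y : Fin (m + 1) → EuclideanSpace ℝ (Fin n))
    (hyS : ∀ j, y j ∈ closedBall (y 0) r)
    (L : Matrix (Fin n) (Fin m) ℝ)
    (hL : L = Matrix.of fun i j => (y j.succ i - y 0 i) / r)
    (hrank : L.rank = n)
    (F : EuclideanSpace ℝ (Fin n) → ℝ)
    (F' : EuclideanSpace ℝ (Fin n) → EuclideanSpace ℝ (Fin n))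
    (hF : ∀ x ∈ closedBall (y 0) r, HasGradientAt F (F' x) x)
    (hlip : ∀ u ∈ closedBall (y 0) r, ∀ v ∈ closedBall (y 0) r, ‖F' u - F' v‖ ≤ ν * ‖u - v‖)
    (c : ℝ) (g : EuclideanSpace ℝ (Fin n)) (G : Matrix (Fin n) (Fin n) ℝ) (hG : G.IsSymm)
    (hint : ∀ j, c + ⟪g, y j⟫ + ⟪y j, mApp G (y j)⟫ / 2 = F (y j)) :
    ∀ x ∈ closedBall (y 0) r,
      |(c + ⟪g, x⟫ + ⟪x, mApp G x⟫ / 2) - F x| ≤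
        ((5 * Real.sqrt m / 2) * l2op (Lᵀ * (L * Lᵀ)⁻¹) + 1 / 2) * (ν + l2op G) * r ^ 2 := by
  intro x hx
  have hconv : Convex ℝ (closedBall (y 0) r) := convex_closedBall _ _
  obtain ⟨Q, hQ⟩ : ∃ Q : EuclideanSpace ℝ (Fin n) → ℝ,
      Q = fun z => c + ⟪g, z⟫ + ⟪z, mApp G z⟫ / 2 := ⟨_, rfl⟩
  obtain ⟨e, he⟩ : ∃ e : EuclideanSpace ℝ (Fin n) → ℝ, e = fun z => Q z - F z := ⟨_, rfl⟩
  obtain ⟨κ, hκdef⟩ : ∃ κ : ℝ, κ = ν + l2op G := ⟨_, rfl⟩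
  have hGnn : 0 ≤ l2op G := l2op_nonneg G
  have hκ : 0 < κ := by rw [hκdef]; positivity
  have hgoal : (c + ⟪g, x⟫ + ⟪x, mApp G x⟫ / 2) - F x = e x := by rw [he, hQ]
  rw [hgoal, ← hκdef]
  -- quadratic algebra
  have hQalg : ∀ u v : EuclideanSpace ℝ (Fin n),
      Q v - Q u - ⟪g + mApp G u, v - u⟫ = ⟪v - u, mApp G (v - u)⟫ / 2 := by
    intro u v
    have hv : u + (v - u) = v := by abel
    set d := v - u with hd
    have hmadd : mApp G (u + d) = mApp G u + mApp G d := by simp [mApp, map_add]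
    have hsym : ⟪u, mApp G d⟫ = ⟪d, mApp G u⟫ := by
      rw [inner_mApp_symm hG, real_inner_comm]
    calc Q v - Q u - ⟪g + mApp G u, d⟫ = Q (u + d) - Q u - ⟪g + mApp G u, d⟫ := by rw [hv]
      _ = ⟪d, mApp G d⟫ / 2 := by
          simp only [hQ, hmadd, inner_add_left, inner_add_right]
          rw [hsym, real_inner_comm (mApp G u) d]
          ring
  -- Taylor bound for the error e
  have heT : ∀ u ∈ closedBall (y 0) r, ∀ v ∈ closedBall (y 0) r,
      |e v - e u - ⟪(g + mApp G u) - F' u, v - u⟫| ≤ κ / 2 * ‖v - u‖ ^ 2 := by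
    intro u hu v hv
    have hFt := taylor_bound hconv hF hlip hu hv
    have h1 : |⟪v - u, mApp G (v - u)⟫| ≤ ‖v - u‖ * ‖mApp G (v - u)‖ := abs_real_inner_le_norm _ _
    have h2 : ‖mApp G (v - u)‖ ≤ l2op G * ‖v - u‖ := l2op_bound G _
    have hQpart : |⟪v - u, mApp G (v - u)⟫ / 2| ≤ l2op G / 2 * ‖v - u‖ ^ 2 := by
      rw [abs_div, abs_two]
      nlinarith [norm_nonneg (v - u), abs_nonneg (⟪v - u, mApp G (v - u)⟫)]
    have hid : e v - e u - ⟪(g + mApp G u) - F' u, v - u⟫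
        = (Q v - Q u - ⟪g + mApp G u, v - u⟫) - (F v - F u - ⟪F' u, v - u⟫) := by
      simp only [he, inner_sub_left]
      ring
    rw [hid, hQalg u v]
    calc |⟪v - u, mApp G (v - u)⟫ / 2 - (F v - F u - ⟪F' u, v - u⟫)|
        ≤ |⟪v - u, mApp G (v - u)⟫ / 2| + |F v - F u - ⟪F' u, v - u⟫| := abs_sub _ _
      _ ≤ l2op G / 2 * ‖v - u‖ ^ 2 + ν / 2 * ‖v - u‖ ^ 2 := add_le_add hQpart hFt
      _ = κ / 2 * ‖v - u‖ ^ 2 := by rw [hκdef]; ring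
  obtain ⟨h, hh⟩ : ∃ h : EuclideanSpace ℝ (Fin n), h = (g + mApp G x) - F' x := ⟨_, rfl⟩
  have hez : ∀ j, e (y j) = 0 := by
    intro j
    rw [he, hQ]
    exact sub_eq_zero.mpr (hint j)
  have hdist : ∀ j, ‖y j - y 0‖ ≤ r := fun j => by
    have := hyS j; rwa [mem_closedBall, dist_eq_norm] at this
  have hxd : ‖x - y 0‖ ≤ r := by rwa [mem_closedBall, dist_eq_norm] at hx
  have hTj : ∀ j : Fin (m + 1), |e (y j) - e x - ⟪h, y j - x⟫| ≤ κ / 2 * ‖y j - x‖ ^ 2 :=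
    fun j => by rw [hh]; exact heT x hx (y j) (hyS j)
  have h0 : ‖y 0 - x‖ ≤ r := by rw [norm_sub_rev]; exact hxd
  have hT0 : |e (y 0) - e x - ⟪h, y 0 - x⟫| ≤ κ / 2 * r ^ 2 := by
    refine (hTj 0).trans ?_
    have h2 : ‖y 0 - x‖ ^ 2 ≤ r ^ 2 := pow_le_pow_left₀ (norm_nonneg _) h0 2
    exact mul_le_mul_of_nonneg_left h2 (by positivity)
  rw [hez 0] at hT0
  -- the key coordinate bound
  have hkey : ∀ j : Fin m, |⟪h, y j.succ - y 0⟫| ≤ 5 / 2 * κ * r ^ 2 := by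
    intro j
    have hA : |e (y j.succ) - e x - ⟪h, y j.succ - x⟫| ≤ 2 * κ * r ^ 2 := by
      refine (hTj j.succ).trans ?_
      have h1 : ‖y j.succ - x‖ ≤ 2 * r := by
        calc ‖y j.succ - x‖ = ‖(y j.succ - y 0) - (x - y 0)‖ := by rw [sub_sub_sub_cancel_right]
          _ ≤ ‖y j.succ - y 0‖ + ‖x - y 0‖ := norm_sub_le _ _
          _ ≤ 2 * r := by linarith [hdist j.succ, hxd]
      have h2 : ‖y j.succ - x‖ ^ 2 ≤ (2 * r) ^ 2 := pow_le_pow_left₀ (norm_nonneg _) h1 2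
      calc κ / 2 * ‖y j.succ - x‖ ^ 2 ≤ κ / 2 * (2 * r) ^ 2 :=
            mul_le_mul_of_nonneg_left h2 (by positivity)
        _ = 2 * κ * r ^ 2 := by ring
    have hsplit : ⟪h, y j.succ - y 0⟫ = ⟪h, y j.succ - x⟫ - ⟪h, y 0 - x⟫ := by
      rw [← inner_sub_right]
      congr 1
      abel
    rw [hez j.succ] at hA
    rw [hsplit]
    calc |⟪h, y j.succ - x⟫ - ⟪h, y 0 - x⟫|
        = |(0 - e x - ⟪h, y 0 - x⟫) - (0 - e x - ⟪h, y j.succ - x⟫)| := by ring_nf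
      _ ≤ |0 - e x - ⟪h, y 0 - x⟫| + |0 - e x - ⟪h, y j.succ - x⟫| := abs_sub _ _
      _ ≤ 5 / 2 * κ * r ^ 2 := by linarith
  -- the coordinate vector
  obtain ⟨w, hw⟩ : ∃ w : EuclideanSpace ℝ (Fin m), w = Matrix.toEuclideanLin Lᵀ h := ⟨_, rfl⟩
  have hwj : ∀ j : Fin m, w j = ⟪h, y j.succ - y 0⟫ / r := by
    intro j
    rw [hw, toEuclideanLin_apply']
    rw [PiLp.inner_apply]
    rw [Finset.sum_div]
    apply Finset.sum_congr rfl
    intro i _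
    simp [hL, Matrix.transpose_apply, RCLike.inner_apply]
    ring
  have hwbound : ∀ j : Fin m, |w j| ≤ 5 / 2 * κ * r := by
    intro j
    rw [hwj j, abs_div, abs_of_pos hr, div_le_iff₀ hr]
    calc |⟪h, y j.succ - y 0⟫| ≤ 5 / 2 * κ * r ^ 2 := hkey j
      _ = 5 / 2 * κ * r * r := by ring
  have hwnorm : ‖w‖ ≤ Real.sqrt m * (5 / 2 * κ * r) :=
    norm_le_sqrt_card w _ (by positivity) hwbound
  have hhnorm : ‖h‖ ≤ l2op (Lᵀ * (L * Lᵀ)⁻¹) * ‖w‖ := by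
    conv_lhs => rw [← recover L hrank h, ← hw]
    rw [← l2op_transpose (Lᵀ * (L * Lᵀ)⁻¹)]
    exact l2op_bound _ _
  -- conclusion
  have hfin : |⟪h, y 0 - x⟫| ≤ ‖h‖ * r := by
    calc |⟪h, y 0 - x⟫| ≤ ‖h‖ * ‖y 0 - x‖ := abs_real_inner_le_norm _ _
      _ ≤ ‖h‖ * r := mul_le_mul_of_nonneg_left h0 (norm_nonneg h)
  have hhn : ‖h‖ ≤ l2op (Lᵀ * (L * Lᵀ)⁻¹) * (Real.sqrt m * (5 / 2 * κ * r)) :=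
    hhnorm.trans (mul_le_mul_of_nonneg_left hwnorm (l2op_nonneg _))
  have hex : |e x| ≤ ‖h‖ * r + κ / 2 * r ^ 2 := by
    have habs : |e x| ≤ |0 - e x - ⟪h, y 0 - x⟫| + |⟪h, y 0 - x⟫| := by
      have h2 : |(0 - e x - ⟪h, y 0 - x⟫) + ⟪h, y 0 - x⟫| = |e x| := by
        rw [show (0 - e x - ⟪h, y 0 - x⟫) + ⟪h, y 0 - x⟫ = -(e x) by ring, abs_neg]
      exact h2 ▸ abs_add_le _ _
    linarith
  have hrn : ‖h‖ * r ≤ l2op (Lᵀ * (L * Lᵀ)⁻¹) * (Real.sqrt m * (5 / 2 * κ * r)) * r :=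
    mul_le_mul_of_nonneg_right hhn hr.le
  calc |e x| ≤ l2op (Lᵀ * (L * Lᵀ)⁻¹) * (Real.sqrt m * (5 / 2 * κ * r)) * r + κ / 2 * r ^ 2 := by
        linarith
    _ = ((5 * Real.sqrt m / 2) * l2op (Lᵀ * (L * Lᵀ)⁻¹) + 1 / 2) * κ * r ^ 2 := by ring
end
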